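/- For the modular maximal-cyclic group M_4(2) of order 16 (the semidirect product C_8 ⋊ C_2 with the action x ↦ x^5), the dual Euler totient φ̂(G) = ∑_{H ≤ G} μ(1,H)·|G:H| equals 0, yet G admits a faithful irreducible complex representation. -/

import Mathlib

/-!
A group generated by `a, b` with `a⁸ = b² = 1` and `b a b⁻¹ = a⁵` is a quotient of the concrete
group `ZMod 8 ⋊ ZMod 2` of order 16, so for `|G| = 16` it is isomorphic to it.

By Rota's cross-cut theorem, `μ(1, H)` is the sum of `(-1)^|S|` over the sets `S` of minimal
subgroups whose join is `H`. In `M₄(2)` the minimal subgroups are generated by the three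
involutions `a⁴, b, a⁴b`, and any two of them generate the Klein four-group `{g | g² = 1}`.
Hence `φ̂(G) = 16 - 3 · 8 + 3 · 4 - 4 = 0`.

For a faithful character `ψ` of `ZMod 8`, the matrices `a ↦ diag(ψ 1, ψ 5)` and
`b ↦ [[0, 1], [1, 0]]` give a faithful representation whose character vanishes off `⟨a⟩` and is
`ψ i + ψ (5 i)` at `aⁱ`. Thus `∑ χ(g) χ(g⁻¹) = ∑ᵢ (2 + 2 ψ (4 i)) = 16 = |G|`, so the
representation is irreducible.
-/

open Finset IncidenceAlgebra

namespace IncidenceAlgebra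

variable {𝕜 α β : Type*} [Ring 𝕜]

section PartialOrder
variable [PartialOrder α] [LocallyFiniteOrder α] [DecidableEq α]

theorem eq_mu_of_eq_neg_sum_Ioc (ν : α → α → 𝕜) (h_self : ∀ a, ν a a = 1)
    (h_lt : ∀ a b, a < b → ν a b = -∑ x ∈ Ioc a b, ν x b) {a b : α} (hab : a ≤ b) :
    ν a b = mu 𝕜 a b := by
  induction hn : #(Icc a b) using Nat.strong_induction_on generalizing a with
  | _ n ih =>
  obtain rfl | hlt := hab.eq_or_lt
  · rw [h_self, mu_self]
  rw [h_lt a b hlt, mu_eq_neg_sum_Ioc_of_ne hlt.ne]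
  refine congrArg Neg.neg (sum_congr rfl fun x hx => ?_)
  obtain ⟨hax, hxb⟩ := mem_Ioc.1 hx
  exact ih _ (hn ▸ card_lt_card (Icc_ssubset_Icc_left hab hax le_rfl)) hxb rfl

variable [PartialOrder β] [LocallyFiniteOrder β] [DecidableEq β]

theorem mu_orderIso (e : α ≃o β) {a b : α} (hab : a ≤ b) : mu 𝕜 (e a) (e b) = mu 𝕜 a b := by
  refine eq_mu_of_eq_neg_sum_Ioc (fun a b => mu 𝕜 (e a) (e b)) (fun a => mu_self _)
    (fun a b hlt => ?_) hab
  rw [mu_eq_neg_sum_Ioc_of_ne (e.strictMono hlt).ne]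
  refine congrArg Neg.neg (sum_nbij' e.symm e ?_ ?_ (fun y _ => e.apply_symm_apply y)
    (fun x _ => e.symm_apply_apply x) fun y _ => by rw [e.apply_symm_apply])
  · intro y hy
    rw [mem_Ioc] at hy ⊢
    rw [← e.lt_iff_lt, ← e.le_iff_le, e.apply_symm_apply]
    exact hy
  · intro x hx
    rw [mem_Ioc] at hx ⊢
    exact ⟨e.lt_iff_lt.2 hx.1, e.le_iff_le.2 hx.2⟩

end PartialOrder

section Lattice
variable [Fintype α] [Lattice α] [OrderBot α] [LocallyFiniteOrder α] [DecidableEq α]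
  [DecidablePred (IsAtom : α → Prop)]

theorem sum_powerset_atoms_sup_le [DecidableLE α] (y : α) :
    ∑ s ∈ (univ.filter IsAtom).powerset with s.sup id ≤ y, (-1 : 𝕜) ^ #s =
      if y = ⊥ then 1 else 0 := by
  have hfilter : {s ∈ (univ.filter (IsAtom : α → Prop)).powerset | s.sup id ≤ y} =
      (univ.filter fun a => IsAtom a ∧ a ≤ y).powerset := by
    ext s
    simp only [mem_filter, mem_powerset, Finset.sup_le_iff, id_eq, subset_iff, mem_univ, true_and]
    exact ⟨fun h a ha => ⟨h.1 ha, h.2 a ha⟩, fun h => ⟨fun a ha => (h ha).1, fun a ha => (h ha).2⟩⟩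
  have hempty : univ.filter (fun a => IsAtom a ∧ a ≤ y) = ∅ ↔ y = ⊥ := by
    simp only [filter_eq_empty_iff, mem_univ, true_implies, not_and]
    exact ⟨fun h => (eq_bot_or_exists_atom_le y).resolve_right fun ⟨a, ha, hay⟩ => h ha hay,
      by rintro rfl a ha hay; exact ha.1 (le_bot_iff.1 hay)⟩
  have hcast := congrArg (Int.cast : ℤ → 𝕜)
    (sum_powerset_neg_one_pow_card (x := univ.filter fun a : α => IsAtom a ∧ a ≤ y))
  push_cast at hcast
  rw [hfilter, hcast]
  simp only [hempty]

theorem mu_bot_eq_sum_powerset_atoms (x : α) :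
    mu 𝕜 ⊥ x = ∑ s ∈ (univ.filter IsAtom).powerset with s.sup id = x, (-1 : 𝕜) ^ #s := by
  classical
  set P := (univ.filter (IsAtom : α → Prop)).powerset
  have hsum : ∀ y, (if y = ⊥ then 1 else 0 : 𝕜) =
      ∑ z ∈ Iic y, ∑ s ∈ P with s.sup id = z, (-1 : 𝕜) ^ #s := by
    intro y
    rw [← sum_powerset_atoms_sup_le, ← sum_fiberwise_of_maps_to (t := Iic y)
      (g := fun s : Finset α => s.sup id) fun s hs => mem_Iic.2 (mem_filter.1 hs).2]
    refine sum_congr rfl fun z hz => ?_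
    rw [filter_filter]
    refine sum_congr (filter_congr fun s _ => ?_) fun _ _ => rfl
    exact ⟨fun h => h.2, fun h => ⟨h ▸ mem_Iic.1 hz, h⟩⟩
  rw [moebius_inversion_bot _ _ hsum, sum_eq_single_of_mem ⊥ (mem_Iic.2 bot_le)
    fun y _ hy => by rw [if_neg hy, mul_zero], if_pos rfl, mul_one]

theorem sum_mu_bot_mul_eq_sum_powerset_atoms (w : α → 𝕜) :
    ∑ x, mu 𝕜 ⊥ x * w x = ∑ s ∈ (univ.filter IsAtom).powerset, (-1 : 𝕜) ^ #s * w (s.sup id) := by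
  simp_rw [mu_bot_eq_sum_powerset_atoms, sum_mul]
  rw [← sum_fiberwise _ fun s : Finset α => s.sup id]
  exact sum_congr rfl fun x _ => sum_congr rfl fun s hs => by rw [(mem_filter.1 hs).2]

theorem sum_mu_bot_mul_eq_of_three_atoms {a b c m : α}
    (hatoms : univ.filter IsAtom = {a, b, c}) (hab : a ≠ b) (hac : a ≠ c) (hbc : b ≠ c)
    (hab_sup : a ⊔ b = m) (hac_sup : a ⊔ c = m) (hbc_sup : b ⊔ c = m) (w : α → 𝕜) :
    ∑ x, mu 𝕜 ⊥ x * w x = w ⊥ - (w a + w b + w c) + 2 * w m := by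
  have ham : a ⊔ m = m := by rw [← hab_sup, ← sup_assoc, sup_idem]
  have ha : a ∉ insert b (insert c (∅ : Finset α)) := by simp [hab, hac]
  have hb : b ∉ insert c (∅ : Finset α) := by simp [hbc]
  rw [sum_mu_bot_mul_eq_sum_powerset_atoms, hatoms, ← insert_empty]
  simp only [sum_powerset_insert ha, sum_powerset_insert hb, sum_powerset_insert (notMem_empty c),
    powerset_empty, sum_singleton]
  simp only [card_empty, pow_zero, sup_empty, one_mul, insert_empty_eq, card_singleton, pow_one,
    sup_singleton, id_eq, neg_mul, mem_singleton, hbc, not_false_eq_true, card_insert_of_notMem,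
    Nat.reduceAdd, even_two, Even.neg_pow, one_pow, sup_insert, hbc_sup, hac, hac_sup, hab, hab_sup,
    mem_insert, or_self, ham]
  noncomm_ring

end Lattice
end IncidenceAlgebra

namespace Subgroup
variable {G : Type*} [Group G]

noncomputable instance instLocallyFiniteOrder [Finite G] : LocallyFiniteOrder (Subgroup G) :=
  LocallyFiniteOrder.ofFiniteIcc fun _ _ => Set.toFinite _

theorem sum_mu_bot_mul_index_congr {G' : Type*} [Group G'] [Finite G] [Finite G']
    [Fintype (Subgroup G)] [Fintype (Subgroup G')] [DecidableEq (Subgroup G)]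
    [DecidableEq (Subgroup G')] (e : G ≃* G') :
    ∑ H : Subgroup G, mu ℤ ⊥ H * (H.index : ℤ) = ∑ H : Subgroup G', mu ℤ ⊥ H * (H.index : ℤ) := by
  refine Fintype.sum_equiv e.mapSubgroup.toEquiv _ _ fun H => ?_
  have hbot : e.mapSubgroup ⊥ = ⊥ := map_bot _
  rw [← hbot, OrderIso.coe_toEquiv, mu_orderIso e.mapSubgroup bot_le, MulEquiv.mapSubgroup_apply,
    index_map_equiv]

theorem isAtom_zpowers {g : G} (hg : (orderOf g).Prime) : IsAtom (zpowers g) := by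
  have hcard : Nat.card (zpowers g) = orderOf g := Nat.card_zpowers g
  refine ⟨zpowers_ne_bot.2 fun h => by simp [h, Nat.not_prime_one] at hg, fun K hK => ?_⟩
  rcases (Nat.dvd_prime hg).1 (hcard ▸ card_dvd_of_le hK.le) with h | h
  · exact card_eq_one.1 h
  · have : Finite (zpowers g) := Nat.finite_of_card_ne_zero (hcard ▸ hg.ne_zero)
    exact absurd (eq_of_le_of_card_ge hK.le (by rw [h, hcard])) hK.ne

theorem isAtom_iff_exists_prime_orderOf [Finite G] {H : Subgroup G} :
    IsAtom H ↔ ∃ g, (orderOf g).Prime ∧ H = zpowers g := by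
  refine ⟨fun hH => ?_, fun ⟨g, hg, hH⟩ => hH ▸ isAtom_zpowers hg⟩
  obtain ⟨p, hp, hpH⟩ := Nat.exists_prime_and_dvd (mt card_eq_one.1 hH.1)
  have : Fact p.Prime := ⟨hp⟩
  have : Fintype H := Fintype.ofFinite H
  obtain ⟨g, hg⟩ := exists_prime_orderOf_dvd_card p (Nat.card_eq_fintype_card (α := H) ▸ hpH)
  refine ⟨g, orderOf_coe g ▸ hg ▸ hp, ?_⟩
  refine ((hH.le_iff.1 (zpowers_le.2 g.2)).resolve_left fun h => ?_).symm
  rw [zpowers_eq_bot, OneMemClass.coe_eq_one] at h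
  exact hp.ne_one (hg ▸ h ▸ orderOf_one)

theorem mem_zpowers_iff_of_orderOf_eq_two [Finite G] {x y : G} (hx : orderOf x = 2) :
    y ∈ zpowers x ↔ y = 1 ∨ y = x := by
  classical
  rw [mem_zpowers_iff_mem_range_orderOf, hx]
  simp [Nat.le_one_iff_eq_zero_or_eq_one, or_and_right, exists_or, eq_comm]

theorem sup_zpowers_eq {x y : G} {K : Subgroup G} (hx : x ∈ K) (hy : y ∈ K)
    (hK : ∀ w ∈ K, w = 1 ∨ w = x ∨ w = y ∨ w = x * y) : zpowers x ⊔ zpowers y = K := by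
  refine le_antisymm (sup_le (zpowers_le.2 hx) (zpowers_le.2 hy)) fun w hw => ?_
  have hxK : x ∈ zpowers x ⊔ zpowers y := mem_sup_left (mem_zpowers x)
  have hyK : y ∈ zpowers x ⊔ zpowers y := mem_sup_right (mem_zpowers y)
  rcases hK w hw with rfl | rfl | rfl | rfl
  exacts [one_mem _, hxK, hyK, mul_mem hxK hyK]

end Subgroup

theorem ZMod.pow_val_add {M : Type*} [Monoid M] {x : M} {n : ℕ} [NeZero n] (hx : x ^ n = 1)
    (i k : ZMod n) : x ^ (i + k).val = x ^ i.val * x ^ k.val := by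
  rw [ZMod.val_add, ← pow_eq_pow_mod _ hx, pow_add]

/-- `M₄(2) = ZMod 8 ⋊ ZMod 2`: the element `⟨i, j⟩` stands for `aⁱ bʲ`, and `b` acts on `⟨a⟩` by
`twist 1 = 5`. -/
@[ext]
structure M42 where
  i : ZMod 8
  j : ZMod 2
deriving DecidableEq, Fintype

namespace M42

theorem zmod_two_eq_zero_or_one (j : ZMod 2) : j = 0 ∨ j = 1 := by
  revert j; decide

def twist (j : ZMod 2) : ZMod 8 := if j = 0 then 1 else 5

instance : One M42 := ⟨⟨0, 0⟩⟩
instance : Mul M42 := ⟨fun g h => ⟨g.i + twist g.j * h.i, g.j + h.j⟩⟩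
instance : Inv M42 := ⟨fun g => ⟨-(twist g.j * g.i), g.j⟩⟩

theorem one_def : (1 : M42) = ⟨0, 0⟩ := rfl

theorem mul_def (g h : M42) : g * h = ⟨g.i + twist g.j * h.i, g.j + h.j⟩ := rfl

theorem inv_mk (i : ZMod 8) (j : ZMod 2) : (⟨i, j⟩ : M42)⁻¹ = ⟨-(twist j * i), j⟩ := rfl

theorem twist_add : ∀ j l : ZMod 2, twist (j + l) = twist j * twist l := by decide

instance : Group M42 :=
  Group.ofLeftAxioms
    (fun g h k => by ext <;> simp only [mul_def, twist_add] <;> ring)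
    (fun g => by ext <;> simp [mul_def, one_def, twist])
    (fun g => by
      ext
      · show -(twist g.j * g.i) + twist g.j * g.i = 0
        ring
      · show g.j + g.j = 0
        exact CharTwo.add_self_eq_zero g.j)

theorem card_eq : Nat.card M42 = 16 := by
  rw [Nat.card_eq_fintype_card]; rfl

def a : M42 := ⟨1, 0⟩

def b : M42 := ⟨0, 1⟩

section lift
variable {H : Type*} [Monoid H] {x y : H}

theorem pow_val_mul_pow_val (hx : x ^ 8 = 1) (hc : SemiconjBy y x (x ^ 5)) (j : ZMod 2)
    (k : ZMod 8) : y ^ j.val * x ^ k.val = x ^ (twist j * k).val * y ^ j.val := by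
  obtain rfl | rfl := zmod_two_eq_zero_or_one j
  · simp [twist]
  · have h5 : (twist 1 * k).val = 5 * k.val % 8 := by
      rw [ZMod.val_mul]; rfl
    rw [h5, ← pow_eq_pow_mod _ hx, pow_mul, ZMod.val_one, pow_one]
    exact (hc.pow_right k.val).eq

def lift (hx : x ^ 8 = 1) (hy : y ^ 2 = 1) (hc : SemiconjBy y x (x ^ 5)) : M42 →* H where
  toFun g := x ^ g.i.val * y ^ g.j.val
  map_one' := by simp [one_def]
  map_mul' g h := by
    simp only [mul_def, ZMod.pow_val_add hx, ZMod.pow_val_add hy, mul_assoc]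
    rw [← mul_assoc (y ^ g.j.val), pow_val_mul_pow_val hx hc, mul_assoc]

theorem lift_a (hx : x ^ 8 = 1) (hy : y ^ 2 = 1) (hc : SemiconjBy y x (x ^ 5)) :
    lift hx hy hc a = x := by
  show x ^ 1 * y ^ 0 = x
  rw [pow_one, pow_zero, mul_one]

theorem lift_b (hx : x ^ 8 = 1) (hy : y ^ 2 = 1) (hc : SemiconjBy y x (x ^ 5)) :
    lift hx hy hc b = y := by
  show x ^ 0 * y ^ 1 = y
  rw [pow_one, pow_zero, one_mul]

end lift

theorem lift_surjective {G : Type*} [Group G] {x y : G} (hx : x ^ 8 = 1) (hy : y ^ 2 = 1)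
    (hc : SemiconjBy y x (x ^ 5)) (hgen : Subgroup.closure {x, y} = ⊤) :
    Function.Surjective (lift hx hy hc) := by
  rw [← MonoidHom.range_eq_top, eq_top_iff, ← hgen, Subgroup.closure_le]
  rintro g (rfl | rfl)
  exacts [⟨a, lift_a hx hy hc⟩, ⟨b, lift_b hx hy hc⟩]

noncomputable def mulEquivOfGenerators {G : Type*} [Group G] {x y : G} (hx : x ^ 8 = 1)
    (hy : y ^ 2 = 1) (hc : SemiconjBy y x (x ^ 5)) (hgen : Subgroup.closure {x, y} = ⊤)
    (hcard : Nat.card G = 16) : M42 ≃* G :=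
  MulEquiv.ofBijective (lift hx hy hc)
    ((lift_surjective hx hy hc hgen).bijective_of_nat_card_le (by rw [card_eq, hcard]))

section SubgroupLattice
open Subgroup

def omegaOne : Subgroup M42 where
  carrier := {g | g ^ 2 = 1}
  one_mem' := one_pow 2
  mul_mem' {g h} := by
    revert g h
    decide
  inv_mem' {g} := by
    revert g
    decide

theorem card_omegaOne : Nat.card omegaOne = 4 := by
  show Nat.card {g : M42 // g ^ 2 = 1} = 4
  rw [Nat.card_eq_fintype_card]; rfl

theorem sq_eq_one_and_ne_one_iff {g : M42} :
    g ^ 2 = 1 ∧ g ≠ 1 ↔ g = ⟨4, 0⟩ ∨ g = b ∨ g = ⟨4, 1⟩ := by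
  revert g; decide

theorem orderOf_prime_iff {g : M42} : (orderOf g).Prime ↔ g ^ 2 = 1 ∧ g ≠ 1 := by
  rw [← orderOf_eq_prime_iff]
  refine ⟨fun hp => ?_, fun h => h ▸ Nat.prime_two⟩
  have : orderOf g ∣ 2 ^ 4 := by
    rw [show 2 ^ 4 = Nat.card M42 from card_eq.symm]; exact orderOf_dvd_natCard g
  exact (Nat.prime_dvd_prime_iff_eq hp Nat.prime_two).1 (hp.dvd_of_dvd_pow this)

theorem orderOf_eq_two {g : M42} (hg : g = ⟨4, 0⟩ ∨ g = b ∨ g = ⟨4, 1⟩) : orderOf g = 2 :=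
  orderOf_eq_prime_iff.2 (sq_eq_one_and_ne_one_iff.2 hg)

theorem filter_isAtom [Fintype (Subgroup M42)] [DecidablePred (IsAtom : Subgroup M42 → Prop)]
    [DecidableEq (Subgroup M42)] :
    univ.filter IsAtom = {zpowers (⟨4, 0⟩ : M42), zpowers b, zpowers (⟨4, 1⟩ : M42)} := by
  ext H
  simp only [mem_filter, mem_univ, true_and, isAtom_iff_exists_prime_orderOf, orderOf_prime_iff,
    sq_eq_one_and_ne_one_iff]
  simp [or_and_right, exists_or]

theorem zpowers_ne_zpowers {g h : M42} (hg : g = ⟨4, 0⟩ ∨ g = b ∨ g = ⟨4, 1⟩)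
    (hgh : ¬(h = 1 ∨ h = g)) : zpowers g ≠ zpowers h := fun heq =>
  hgh ((mem_zpowers_iff_of_orderOf_eq_two (orderOf_eq_two hg)).1 (heq ▸ mem_zpowers h))

theorem sup_zpowers_eq_omegaOne {g h : M42} (hg : g ^ 2 = 1) (hh : h ^ 2 = 1)
    (hK : ∀ w : M42, w ^ 2 = 1 → w = 1 ∨ w = g ∨ w = h ∨ w = g * h) :
    zpowers g ⊔ zpowers h = omegaOne :=
  sup_zpowers_eq hg hh hK

theorem index_zpowers {g : M42} (hg : g = ⟨4, 0⟩ ∨ g = b ∨ g = ⟨4, 1⟩) :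
    (zpowers g).index = 8 := by
  have := card_mul_index (zpowers g)
  rw [Nat.card_zpowers, orderOf_eq_two hg, card_eq] at this
  omega

theorem index_omegaOne : omegaOne.index = 4 := by
  have := card_mul_index omegaOne
  rw [card_omegaOne, card_eq] at this
  omega

theorem sum_mu_bot_mul_index [Fintype (Subgroup M42)] [DecidableEq (Subgroup M42)] :
    ∑ H : Subgroup M42, mu ℤ ⊥ H * (H.index : ℤ) = 0 := by
  classical
  rw [sum_mu_bot_mul_eq_of_three_atoms filter_isAtom
    (zpowers_ne_zpowers (by decide) (by decide)) (zpowers_ne_zpowers (by decide) (by decide))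
    (zpowers_ne_zpowers (by decide) (by decide))
    (sup_zpowers_eq_omegaOne (by decide) (by decide) (by decide))
    (sup_zpowers_eq_omegaOne (by decide) (by decide) (by decide))
    (sup_zpowers_eq_omegaOne (by decide) (by decide) (by decide)),
    index_bot, card_eq, index_zpowers (by decide), index_zpowers (by decide),
    index_zpowers (by decide), index_omegaOne]
  norm_num

end SubgroupLattice

section Representation
open Matrix

variable (ψ : AddChar (ZMod 8) ℂ)

def diagChar : Matrix (Fin 2) (Fin 2) ℂ := diagonal ![ψ 1, ψ 5]

def swap : Matrix (Fin 2) (Fin 2) ℂ := !![0, 1; 1, 0]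

theorem diagChar_pow (n : ℕ) : diagChar ψ ^ n = diagonal ![ψ (n • 1), ψ (n • 5)] := by
  rw [diagChar, diagonal_pow]
  congr 1
  ext k
  fin_cases k <;> exact (ψ.map_nsmul_eq_pow n _).symm

theorem diagChar_pow_eight : diagChar ψ ^ 8 = 1 := by
  rw [diagChar_pow, show (8 • 1 : ZMod 8) = 0 from rfl, show (8 • 5 : ZMod 8) = 0 from rfl,
    AddChar.map_zero_eq_one, ← diagonal_one]
  congr 1
  ext k
  fin_cases k <;> rfl

theorem swap_sq : swap ^ 2 = 1 := by
  ext k l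
  fin_cases k <;> fin_cases l <;> simp [swap, sq]

theorem semiconjBy_swap_diagChar : SemiconjBy swap (diagChar ψ) (diagChar ψ ^ 5) := by
  rw [SemiconjBy, diagChar_pow, show (5 • 1 : ZMod 8) = 5 from rfl,
    show (5 • 5 : ZMod 8) = 1 from rfl]
  ext k l
  fin_cases k <;> fin_cases l <;> simp [swap, diagChar]

noncomputable def toMatrix : M42 →* Matrix (Fin 2) (Fin 2) ℂ :=
  lift (diagChar_pow_eight ψ) swap_sq (semiconjBy_swap_diagChar ψ)

theorem toMatrix_apply (g : M42) :
    toMatrix ψ g = diagonal ![ψ g.i, ψ (5 * g.i)] * swap ^ g.j.val := by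
  show diagChar ψ ^ g.i.val * swap ^ g.j.val = _
  rw [diagChar_pow, nsmul_eq_mul, nsmul_eq_mul, ZMod.natCast_zmod_val, mul_one, mul_comm]

theorem trace_toMatrix (g : M42) :
    (toMatrix ψ g).trace = if g.j = 0 then ψ g.i + ψ (5 * g.i) else 0 := by
  obtain ⟨i, j⟩ := g
  obtain rfl | rfl := zmod_two_eq_zero_or_one j
  · simp [toMatrix_apply, trace]
  · simp [toMatrix_apply, trace, swap, show (1 : ZMod 2).val = 1 from rfl]

def equivProd : M42 ≃ ZMod 8 × ZMod 2 where
  toFun g := (g.i, g.j)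
  invFun p := ⟨p.1, p.2⟩

theorem sum_trace_mul_trace_inv (hψ : ψ 4 ≠ 1) :
    ∑ g : M42, (toMatrix ψ g).trace * (toMatrix ψ g⁻¹).trace = 16 := by
  have hsum : ∑ i : ZMod 8, ψ (4 * i) = 0 :=
    AddChar.sum_eq_zero_of_ne_one (ψ := ψ.compAddMonoidHom (AddMonoidHom.mulLeft 4))
      fun h => hψ (by simpa using DFunLike.congr_fun h 1)
  have hterm (i : ZMod 8) :
      (ψ i + ψ (5 * i)) * (ψ (-i) + ψ (-(5 * i))) = 2 + 2 * ψ (4 * i) := by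
    have h8 : (8 : ZMod 8) = 0 := rfl
    simp only [add_mul, mul_add, ← AddChar.map_add_eq_mul]
    rw [show i + -i = 0 by ring, show 5 * i + -(5 * i) = 0 by ring,
      show i + -(5 * i) = 4 * i by linear_combination (-i) * h8,
      show 5 * i + -i = 4 * i by ring, AddChar.map_zero_eq_one]
    ring
  rw [← equivProd.symm.sum_comp, Fintype.sum_prod_type]
  simp only [show ∀ f : ZMod 2 → ℂ, ∑ j, f j = f 0 + f 1 from Fin.sum_univ_two]
  simp only [equivProd, Equiv.coe_fn_symm_mk, inv_mk, trace_toMatrix]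
  norm_num [twist, hterm, Finset.sum_add_distrib, ← Finset.mul_sum, hsum]

variable {ψ} in
theorem eq_zero_of_apply_eq_one (hψ : ψ 4 ≠ 1) {i : ZMod 8} (hi : ψ i = 1) : i = 0 := by
  by_contra hne
  obtain ⟨n, hn⟩ := (by decide : ∀ i : ZMod 8, i ≠ 0 → ∃ n : Fin 8, (n : ℕ) • i = 4) i hne
  exact hψ (by rw [← hn, AddChar.map_nsmul_eq_pow, hi, one_pow])

theorem toMatrix_injective (hψ : ψ 4 ≠ 1) : Function.Injective (toMatrix ψ) := by
  refine (injective_iff_map_eq_one _).2 fun ⟨i, j⟩ h => ?_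
  have h00 := congrFun (congrFun h 0) 0
  rw [toMatrix_apply] at h00
  obtain rfl | rfl := zmod_two_eq_zero_or_one j
  · simp only [ZMod.val_zero, pow_zero, mul_one, diagonal_apply_eq, Matrix.cons_val_zero,
      one_apply_eq] at h00
    rw [eq_zero_of_apply_eq_one hψ h00]
    rfl
  · simp [swap, show (1 : ZMod 2).val = 1 from rfl] at h00

theorem exists_addChar_apply_four_ne_one : ∃ ψ : AddChar (ZMod 8) ℂ, ψ 4 ≠ 1 := by
  have hζ := Complex.isPrimitiveRoot_exp 8 (by norm_num)
  exact ⟨AddChar.zmodChar 8 hζ.pow_eq_one, by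
    rw [AddChar.zmodChar_apply]; exact hζ.pow_ne_one_of_pos_of_lt (by decide) (by decide)⟩

open CategoryTheory in
theorem exists_simple_faithful_fdRep {G : Type} [Group G] [Fintype G] (e : M42 ≃* G) :
    ∃ V : FDRep ℂ G, Simple V ∧ Function.Injective V.ρ := by
  obtain ⟨ψ, hψ⟩ := exists_addChar_apply_four_ne_one
  let ρ : Representation ℂ G (Fin 2 → ℂ) :=
    Matrix.toLinAlgEquiv'.toRingEquiv.toMonoidHom.comp ((toMatrix ψ).comp e.symm.toMonoidHom)
  refine ⟨FDRep.of ρ, (FDRep.simple_iff_char_is_norm_one _).2 ?_, ?_⟩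
  · have hχ (g : G) : (FDRep.of ρ).character g = (toMatrix ψ (e.symm g)).trace :=
      Matrix.trace_toLin'_eq _
    simp only [hχ, map_inv]
    rw [← e.toEquiv.sum_comp, ← Nat.card_congr e.toEquiv, card_eq]
    simpa using sum_trace_mul_trace_inv ψ hψ
  · rw [FDRep.of_ρ']
    exact Matrix.toLinAlgEquiv'.injective.comp ((toMatrix_injective ψ hψ).comp e.symm.injective)

end Representation

end M42

open scoped Classical in
/-- For the modular maximal-cyclic group `M₄(2)` of order 16
(`⟨a,b | a⁸ = b² = 1, b a b⁻¹ = a⁵⟩`), the dual Euler totient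
`φ̂(G) = ∑_{H ≤ G} μ(1,H)·|G:H|` vanishes, yet `G` admits a faithful
irreducible complex representation. -/
theorem stmt15 {G : Type} [Group G] [Fintype G]
    (a b : G) (ha : orderOf a = 8) (hb : orderOf b = 2)
    (hrel : b * a * b⁻¹ = a ^ 5)
    (hgen : Subgroup.closure ({a, b} : Set G) = ⊤)
    (hcard : Nat.card G = 16)
    (μ : Subgroup G → Subgroup G → ℤ)
    (hμ_self : ∀ K : Subgroup G, μ K K = 1)
    (hμ_lt : ∀ K K' : Subgroup G, K < K' →
      μ K K' = -∑ L ∈ Finset.univ.filter (fun L : Subgroup G => K < L ∧ L ≤ K'), μ L K') :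
    (∑ H : Subgroup G, μ ⊥ H * (H.index : ℤ)) = 0 ∧
      ∃ V : FDRep ℂ G, CategoryTheory.Simple V ∧ Function.Injective V.ρ := by
  let e := M42.mulEquivOfGenerators (ha ▸ pow_orderOf_eq_one a) (hb ▸ pow_orderOf_eq_one b)
    (mul_inv_eq_iff_eq_mul.1 hrel) hgen hcard
  have hμ_Ioc (K K' : Subgroup G) (h : K < K') : μ K K' = -∑ L ∈ Ioc K K', μ L K' := by
    rw [hμ_lt K K' h]
    congr 2
    ext L
    simp
  refine ⟨?_, M42.exists_simple_faithful_fdRep e⟩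
  calc ∑ H : Subgroup G, μ ⊥ H * (H.index : ℤ)
      = ∑ H : Subgroup G, mu ℤ ⊥ H * (H.index : ℤ) := sum_congr rfl fun H _ => by
        rw [eq_mu_of_eq_neg_sum_Ioc μ hμ_self hμ_Ioc bot_le]
    _ = ∑ H : Subgroup M42, mu ℤ ⊥ H * (H.index : ℤ) :=
        (Subgroup.sum_mu_bot_mul_index_congr e).symm
    _ = 0 := M42.sum_mu_bot_mul_index
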